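/- arXiv:1506.02812 — 7 statements merged into one kernel-verified Lean document; each statement's English description precedes it below -/
import Mathlib

section
/- For two central soft sets (f, A) and (g, B) over a common universe U, the central soft information order (f, A) ⊑ (g, B) holds if and only if A ⊆ B and, for every parameter e ∈ E with e ∉ B − A, one has f(e) ⊆ g(e). -/
open Classical

/-- A central soft set over a universe `U` with parameter set `E`:
a mapping `f : E → Set U` together with a central set `A ⊆ E`. -/
structure CSS (E U : Type*) where
  f : E → Set U
  A : Set E

/-- Union of central soft sets. -/
noncomputable def cssUnion {E U : Type*} (s t : CSS E U) : CSS E U where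
  f := fun e =>
    if e ∈ s.A \ t.A then s.f e
    else if e ∈ t.A \ s.A then t.f e
    else s.f e ∪ t.f e
  A := s.A ∪ t.A

/-- Intersection of central soft sets. -/
noncomputable def cssInter {E U : Type*} (s t : CSS E U) : CSS E U where
  f := fun e =>
    if e ∈ s.A \ t.A then t.f e
    else if e ∈ t.A \ s.A then s.f e
    else s.f e ∩ t.f e
  A := s.A ∩ t.A

/-- Complement of a central soft set. -/
def cssCompl {E U : Type*} (s : CSS E U) : CSS E U where
  f := fun e => (s.f e)ᶜ
  A := s.Aᶜ

/-- Difference of central soft sets: `s − t = s ⊓ tᶜ`. -/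
noncomputable def cssDiff {E U : Type*} (s t : CSS E U) : CSS E U :=
  cssInter s (cssCompl t)

/-- The central soft information order: `s ⊑ t` iff `s ⊔ t = t`. -/
def cssLE {E U : Type*} (s t : CSS E U) : Prop := cssUnion s t = t

/-- Projection of a central soft set over a set `B` of parameters
(the mapping is unchanged, the central set becomes `B`). -/
def cssProj {E U : Type*} (s : CSS E U) (B : Set E) : CSS E U where
  f := s.f
  A := B

/-- Supremum of a family of central soft sets. -/
noncomputable def cssSup {E U ι : Type*} (F : ι → CSS E U) : CSS E U where
  f := fun e =>
    if {i : ι | e ∈ (F i).A}.Nonempty then ⋃ i ∈ {i : ι | e ∈ (F i).A}, (F i).f e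
    else ⋃ i, (F i).f e
  A := ⋃ i, (F i).A

theorem CSS.eq_iff {E U : Type*} (s t : CSS E U) : s = t ↔ s.f = t.f ∧ s.A = t.A := by
  cases s; cases t; simp

section

variable {E U : Type*}

theorem cssUnion_A (s t : CSS E U) : (cssUnion s t).A = s.A ∪ t.A := rfl

theorem cssUnion_f_of_subset {s t : CSS E U} (h : s.A ⊆ t.A) (e : E) :
    (cssUnion s t).f e = if e ∈ t.A \ s.A then t.f e else s.f e ∪ t.f e := by
  have he : e ∉ s.A \ t.A := fun he => he.2 (h he.1)
  simp only [cssUnion, if_neg he]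

theorem cssLE_iff (s t : CSS E U) :
    cssLE s t ↔ s.A ⊆ t.A ∧ ∀ e, e ∉ t.A \ s.A → s.f e ⊆ t.f e := by
  rw [cssLE, CSS.eq_iff, and_comm, cssUnion_A, Set.union_eq_right]
  refine and_congr_right fun h => ?_
  simp only [funext_iff, cssUnion_f_of_subset h]
  refine forall_congr' fun e => ?_
  split_ifs with he <;> simp [he]

end

theorem stmt2 {E U : Type*} (f g : E → Set U) (A B : Set E) :
    cssLE (⟨f, A⟩ : CSS E U) ⟨g, B⟩ ↔ (A ⊆ B ∧ ∀ e, e ∉ B \ A → f e ⊆ g e) :=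
  cssLE_iff _ _
end

section
/- De Morgan law for intersection: for any two central soft sets (f, A) and (g, B) over a common universe U, [(f, A) ⊓ (g, B)]^c = (f, A)^c ⊔ (g, B)^c. -/
open Classical

theorem stmt7 {E U : Type*} (s t : CSS E U) :
    cssCompl (cssInter s t) = cssUnion (cssCompl s) (cssCompl t) := by
  simp only [cssCompl, cssInter, cssUnion, CSS.mk.injEq, Set.compl_inter, and_true]
  funext e
  -- Complementation swaps the exclusive regions (`s.Aᶜ \ t.Aᶜ = t.A \ s.A`), and with them the
  -- branches of `cssInter` and `cssUnion`; on the common region this is De Morgan in `Set U`.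
  by_cases hs : e ∈ s.A <;> by_cases ht : e ∈ t.A <;> simp [hs, ht, Set.compl_inter]
end

section
/- De Morgan law for union: for any two central soft sets (f, A) and (g, B) over a common universe U, [(f, A) ⊔ (g, B)]^c = (f, A)^c ⊓ (g, B)^c. -/
open Classical

theorem CSS.ext {E U : Type*} {s t : CSS E U} (hf : s.f = t.f) (hA : s.A = t.A) : s = t := by
  cases s
  cases t
  congr

/- The complement swaps `A − B` and `Bᶜ − Aᶜ`, which is why `⊓` takes its values on the
one-sided parts from the *other* soft set. -/
theorem cssCompl_cssUnion_f {E U : Type*} (s t : CSS E U) (e : E) :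
    (cssCompl (cssUnion s t)).f e = (cssInter (cssCompl s) (cssCompl t)).f e := by
  by_cases hs : e ∈ s.A <;> by_cases ht : e ∈ t.A <;>
    simp [cssCompl, cssUnion, cssInter, hs, ht, Set.compl_union]

theorem stmt8 {E U : Type*} (s t : CSS E U) :
    cssCompl (cssUnion s t) = cssInter (cssCompl s) (cssCompl t) :=
  CSS.ext (funext (cssCompl_cssUnion_f s t)) (Set.compl_union s.A t.A)
end

section
/- Union distributes over intersection for central soft sets: for central soft sets (f, A), (g, B), and (h, C) over a common universe U, (f, A) ⊔ [(g, B) ⊓ (h, C)] = [(f, A) ⊔ (g, B)] ⊓ [(f, A) ⊔ (h, C)]. -/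
open Classical

-- Pointwise, each of the eight membership patterns of `e` in the three central sets is either
-- trivial or distributivity of `∪` over `∩` in `Set U`.
theorem cssUnion_cssInter_distrib_left_f {E U : Type*} (s t u : CSS E U) :
    (cssUnion s (cssInter t u)).f = (cssInter (cssUnion s t) (cssUnion s u)).f := by
  funext e
  by_cases hs : e ∈ s.A <;> by_cases ht : e ∈ t.A <;> by_cases hu : e ∈ u.A <;>
    simp [cssUnion, cssInter, hs, ht, hu, Set.union_inter_distrib_left]

theorem stmt12 {E U : Type*} (s t u : CSS E U) :
    cssUnion s (cssInter t u) = cssInter (cssUnion s t) (cssUnion s u) :=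
  CSS.ext (cssUnion_cssInter_distrib_left_f s t u) (Set.union_inter_distrib_left _ _ _)
end

section
/- For two central soft sets (f, A) and (g, B) over a common universe U and any set of parameters S with S ⊆ A ∪ B, the projection of the union is below the union of the projections: [(f, A) ⊔ (g, B)]↓S ⊑ (f, A)↓(S ∩ A) ⊔ (g, B)↓(S ∩ B). -/
open Classical

/-! Both sides have central set `S`. On `S` their mappings coincide; off `S` the right-hand
mapping is `f ∪ g`, which contains every value of the left-hand one. -/

section

variable {E U : Type*}

theorem cssUnion_of_A_eq {s t : CSS E U} (h : s.A = t.A) :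
    cssUnion s t = ⟨fun e => s.f e ∪ t.f e, s.A⟩ := by
  simp [cssUnion, h]

theorem cssLE_of_A_eq_of_f_subset {s t : CSS E U} (hA : s.A = t.A) (hf : ∀ e, s.f e ⊆ t.f e) :
    cssLE s t := by
  rw [cssLE, cssUnion_of_A_eq hA]
  cases t
  simp only [CSS.mk.injEq, hA, and_true]
  exact funext fun e => Set.union_eq_right.mpr (hf e)

theorem cssUnion_f_subset (s t : CSS E U) (e : E) : (cssUnion s t).f e ⊆ s.f e ∪ t.f e := by
  simp only [cssUnion]
  split_ifs
  · exact Set.subset_union_left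
  · exact Set.subset_union_right
  · exact subset_rfl

theorem cssUnion_f_of_notMem {s t : CSS E U} {e : E} (hs : e ∉ s.A) (ht : e ∉ t.A) :
    (cssUnion s t).f e = s.f e ∪ t.f e := by
  simp [cssUnion, hs, ht]

theorem cssUnion_cssProj_inter_f {s t : CSS E U} {S : Set E} {e : E} (he : e ∈ S) :
    (cssUnion (cssProj s (S ∩ s.A)) (cssProj t (S ∩ t.A))).f e = (cssUnion s t).f e := by
  simp [cssUnion, cssProj, he]

end

theorem stmt17 {E U : Type*} (f g : E → Set U) (A B S : Set E) (hS : S ⊆ A ∪ B) :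
    cssLE (cssProj (cssUnion (⟨f, A⟩ : CSS E U) ⟨g, B⟩) S)
      (cssUnion (cssProj (⟨f, A⟩ : CSS E U) (S ∩ A)) (cssProj (⟨g, B⟩ : CSS E U) (S ∩ B))) := by
  refine cssLE_of_A_eq_of_f_subset ?_ fun e => ?_
  · simp only [cssProj, cssUnion, ← Set.inter_union_distrib_left, Set.inter_eq_left.mpr hS]
  by_cases he : e ∈ S
  · exact (cssUnion_cssProj_inter_f he).symm.subset
  · rw [cssUnion_f_of_notMem (fun h : e ∈ S ∩ A => he h.1) (fun h : e ∈ S ∩ B => he h.1)]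
    exact cssUnion_f_subset _ _ e
end

section
/- For two central soft sets (f, A) and (g, B) over a common universe U, if S = (A ∪ B) − D for some D ⊆ A ∩ B, then the projection of the union equals the union of the projections: [(f, A) ⊔ (g, B)]↓S = (f, A)↓(S ∩ A) ⊔ (g, B)↓(S ∩ B). -/
open Classical

attribute [ext] CSS

/- The mapping of `s ⊔ t` is read off from `s.A \ t.A` and `t.A \ s.A` alone, and cutting the
central sets down to `S` leaves both unchanged exactly when `S` contains them. -/

theorem cssUnion_f_congr {E U : Type*} {s t s' t' : CSS E U} (hs : s.f = s'.f) (ht : t.f = t'.f)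
    (hst : s.A \ t.A = s'.A \ t'.A) (hts : t.A \ s.A = t'.A \ s'.A) :
    (cssUnion s t).f = (cssUnion s' t').f := by
  simp only [cssUnion, hs, ht, hst, hts]

theorem inter_diff_inter_of_diff_subset {α : Type*} {S A B : Set α} (h : A \ B ⊆ S) :
    (S ∩ A) \ (S ∩ B) = A \ B := by
  rw [← Set.inter_sdiff_distrib_left, Set.inter_eq_right.mpr h]

theorem cssProj_cssUnion {E U : Type*} (s t : CSS E U) (S : Set E) (hS : S ⊆ s.A ∪ t.A)
    (hst : s.A \ t.A ⊆ S) (hts : t.A \ s.A ⊆ S) :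
    cssProj (cssUnion s t) S = cssUnion (cssProj s (S ∩ s.A)) (cssProj t (S ∩ t.A)) := by
  have hf : (cssUnion s t).f = (cssUnion (cssProj s (S ∩ s.A)) (cssProj t (S ∩ t.A))).f :=
    cssUnion_f_congr rfl rfl (inter_diff_inter_of_diff_subset hst).symm
      (inter_diff_inter_of_diff_subset hts).symm
  have hA : S = S ∩ s.A ∪ S ∩ t.A := by
    rw [← Set.inter_union_distrib_left, Set.inter_eq_left.mpr hS]
  exact CSS.ext hf hA

theorem stmt18 {E U : Type*} (f g : E → Set U) (A B S D : Set E)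
    (hD : D ⊆ A ∩ B) (hS : S = (A ∪ B) \ D) :
    cssProj (cssUnion (⟨f, A⟩ : CSS E U) ⟨g, B⟩) S
      = cssUnion (cssProj (⟨f, A⟩ : CSS E U) (S ∩ A)) (cssProj (⟨g, B⟩ : CSS E U) (S ∩ B)) := by
  subst hS
  refine cssProj_cssUnion _ _ _ Set.sdiff_subset ?_ ?_
  · exact Set.sdiff_subset_sdiff Set.subset_union_left fun _ hd => (hD hd).2
  · exact Set.sdiff_subset_sdiff Set.subset_union_right fun _ hd => (hD hd).1
end

section
/- For two central soft sets (f, A) and (g, B) over a common universe U and any set of parameters S with S ⊆ A ∩ B, the intersection of the projections is below the projection of the intersection: (f, A)↓S ⊓ (g, B)↓S ⊑ [(f, A) ⊓ (g, B)]↓S. -/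
open Classical

theorem cssLE_of_A_eq_of_subset {E U : Type*} {s t : CSS E U} (hA : s.A = t.A)
    (hf : ∀ e, s.f e ⊆ t.f e) : cssLE s t := by
  obtain ⟨f, A⟩ := s
  obtain ⟨g, B⟩ := t
  subst hA
  simp only [cssLE, cssUnion, Set.sdiff_self, Set.mem_empty_iff_false, if_false, Set.union_self,
    CSS.mk.injEq, and_true]
  exact funext fun e => Set.union_eq_self_of_subset_left (hf e)

theorem cssInter_f_of_A_eq {E U : Type*} {s t : CSS E U} (hA : s.A = t.A) (e : E) :
    (cssInter s t).f e = s.f e ∩ t.f e := by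
  simp [cssInter, hA]

theorem inter_subset_cssInter_f {E U : Type*} (s t : CSS E U) (e : E) :
    s.f e ∩ t.f e ⊆ (cssInter s t).f e := by
  simp only [cssInter]
  split_ifs
  · exact Set.inter_subset_right
  · exact Set.inter_subset_left
  · exact subset_rfl

theorem stmt19_general {E U : Type*} (f g : E → Set U) (A B S : Set E) :
    cssLE (cssInter (cssProj (⟨f, A⟩ : CSS E U) S) (cssProj (⟨g, B⟩ : CSS E U) S))
      (cssProj (cssInter (⟨f, A⟩ : CSS E U) ⟨g, B⟩) S) := by
  refine cssLE_of_A_eq_of_subset (Set.inter_self S) fun e => ?_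
  exact (cssInter_f_of_A_eq (by rfl) e).trans_subset
    (inter_subset_cssInter_f ⟨f, A⟩ ⟨g, B⟩ e)

theorem stmt19 {E U : Type*} (f g : E → Set U) (A B S : Set E) (hS : S ⊆ A ∩ B) :
    cssLE (cssInter (cssProj (⟨f, A⟩ : CSS E U) S) (cssProj (⟨g, B⟩ : CSS E U) S))
      (cssProj (cssInter (⟨f, A⟩ : CSS E U) ⟨g, B⟩) S) :=
  stmt19_general f g A B S
end
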